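/- Uniform interior convergence of scaled log-quantiles: Fix α ∈ (0,1) and let K ⊆ W⁺⁺ be compact. Define L(W) := Σ_{i=1}^m p_i log W_i and G_{n,α}(W) := (1/n) · log Q_{n,α}(W) (which is well defined on W⁺⁺ since Q_{n,α}(W) > 0 there). Then sup_{W ∈ K} |G_{n,α}(W) − L(W)| → 0 as n → ∞. -/
import Mathlib


open Finset Filter Topology
open scoped Classical

noncomputable section

/-- The closed Arrow–Debreu wealth simplex `{W ∈ [0,∞)^m : Σ q_i W_i = 1}`. -/
def closedSimplex {m : ℕ} (q : Fin m → ℝ) : Set (Fin m → ℝ) :=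
  {W | (∀ i, 0 ≤ W i) ∧ ∑ i, q i * W i = 1}

/-- The open Arrow–Debreu wealth simplex `{W ∈ (0,∞)^m : Σ q_i W_i = 1}`. -/
def openSimplex {m : ℕ} (q : Fin m → ℝ) : Set (Fin m → ℝ) :=
  {W | (∀ i, 0 < W i) ∧ ∑ i, q i * W i = 1}

/-- The finite set `C_n` of count vectors `k : Fin m → ℕ` with `Σ k_i = n`. -/
def countFinset (m n : ℕ) : Finset (Fin m → ℕ) :=
  (Fintype.piFinset fun _ : Fin m => Finset.range (n + 1)).filter fun k => ∑ i, k i = n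

/-- The monomial `W^k := Π_i W_i^{k_i}` (with the convention `0^0 = 1`). -/
def mono {m : ℕ} (W : Fin m → ℝ) (k : Fin m → ℕ) : ℝ := ∏ i, W i ^ k i

/-- The multinomial probability `π_k = (n!/(k_1!⋯k_m!))·Π p_i^{k_i}`. -/
def countProb {m : ℕ} (p : Fin m → ℝ) (k : Fin m → ℕ) : ℝ :=
  (Nat.multinomial Finset.univ k : ℝ) * ∏ i, p i ^ k i

/-- The upper α-quantile of terminal wealth
`Q_{n,α}(W) := sup{t ∈ [0,∞) : Σ_{k ∈ C_n : W^k ≥ t} π_k ≥ α}`. -/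
def upperQuantile {m : ℕ} (p : Fin m → ℝ) (n : ℕ) (α : ℝ) (W : Fin m → ℝ) : ℝ :=
  sSup {t : ℝ | 0 ≤ t ∧
    α ≤ ∑ k ∈ countFinset m n, if t ≤ mono W k then countProb p k else 0}

/-- The union of the count hyperplanes `H_{k,ℓ}`. -/
def hyperUnion (m n : ℕ) : Set (Fin m → ℝ) :=
  {u | ∃ k ∈ countFinset m n, ∃ l ∈ countFinset m n,
    k ≠ l ∧ ∑ i, ((k i : ℝ) - (l i : ℝ)) * u i = 0}

/-- A chamber is a connected component of the complement of the count arrangement. -/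
def IsChamber (m n : ℕ) (Γ : Set (Fin m → ℝ)) : Prop :=
  ∃ u ∈ (hyperUnion m n)ᶜ, Γ = connectedComponentIn (hyperUnion m n)ᶜ u

/-- `F_Γ := {W ∈ W⁺⁺ : log W ∈ Γ}`. -/
def chamberFace {m : ℕ} (q : Fin m → ℝ) (Γ : Set (Fin m → ℝ)) : Set (Fin m → ℝ) :=
  {W | W ∈ openSimplex q ∧ (fun i => Real.log (W i)) ∈ Γ}

/-- `k` is the quantile count vector `k_{α,Γ}` of the chamber `Γ`: the tail mass at `W^k`
is at least `α`, while the strict tail mass is below `α`, for every `W ∈ F_Γ`. -/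
def IsQuantileVec {m : ℕ} (p q : Fin m → ℝ) (n : ℕ) (α : ℝ) (Γ : Set (Fin m → ℝ))
    (k : Fin m → ℕ) : Prop :=
  k ∈ countFinset m n ∧
  ∀ W ∈ chamberFace q Γ,
    α ≤ (∑ l ∈ countFinset m n, if mono W k ≤ mono W l then countProb p l else 0) ∧
    (∑ l ∈ countFinset m n, if mono W k < mono W l then countProb p l else 0) < α

lemma countFinset_eq (m n : ℕ) : countFinset m n = Finset.piAntidiag Finset.univ n := by
  ext k
  simp only [countFinset, Finset.mem_filter, Fintype.mem_piFinset, Finset.mem_range,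
    Nat.lt_succ_iff, Finset.mem_piAntidiag, Finset.mem_univ, imp_true_iff, and_true]
  exact ⟨fun h => h.2, fun h =>
    ⟨fun i => h ▸ Finset.single_le_sum (fun j _ => Nat.zero_le _) (Finset.mem_univ i), h⟩⟩

lemma multinomial_sum_eq {m : ℕ} (n : ℕ) (x : Fin m → ℝ) :
    ∑ k ∈ countFinset m n, (Nat.multinomial Finset.univ k : ℝ) * ∏ i, x i ^ k i
      = (∑ i, x i) ^ n := by
  rw [countFinset_eq]
  exact (Finset.sum_pow_eq_sum_piAntidiag Finset.univ x n).symm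

lemma countProb_nonneg {m : ℕ} {p : Fin m → ℝ} (hp : ∀ i, 0 ≤ p i) (k : Fin m → ℕ) :
    0 ≤ countProb p k :=
  mul_nonneg (Nat.cast_nonneg _) (Finset.prod_nonneg fun i _ => pow_nonneg (hp i) _)

lemma countProb_sum {m : ℕ} {p : Fin m → ℝ} (hpsum : ∑ i, p i = 1) (n : ℕ) :
    ∑ k ∈ countFinset m n, countProb p k = 1 := by
  simpa [countProb, hpsum] using multinomial_sum_eq n p

lemma mono_eq_exp {m : ℕ} {W : Fin m → ℝ} (hW : ∀ i, 0 < W i) (k : Fin m → ℕ) :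
    mono W k = Real.exp (∑ i, (k i : ℝ) * Real.log (W i)) := by
  rw [Real.exp_sum]
  refine Finset.prod_congr rfl fun i _ => ?_
  rw [Real.exp_nat_mul, Real.exp_log (hW i)]

lemma chernoff {m : ℕ} (p : Fin m → ℝ) (hp : ∀ i, 0 ≤ p i) (hpsum : ∑ i, p i = 1)
    (a : Fin m → ℝ) (M ε lam : ℝ) (hM : ∀ i, |a i| ≤ M) (hε : 0 < ε) (hlam : 0 < lam)
    (hB1 : lam * (2 * M + ε) ≤ 1) (hB2 : lam * (2 * M + ε) ^ 2 ≤ ε / 2) (n : ℕ) :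
    ∑ k ∈ countFinset m n,
      (if (n : ℝ) * ((∑ i, p i * a i) + ε) ≤ ∑ i, (k i : ℝ) * a i
        then countProb p k else 0)
      ≤ (1 - lam * ε / 2) ^ n := by
  set L : ℝ := ∑ i, p i * a i with hL
  have hLM : |L| ≤ M := by
    calc |L| ≤ ∑ i, |p i * a i| := Finset.abs_sum_le_sum_abs _ _
    _ ≤ ∑ i, p i * M := by
        refine Finset.sum_le_sum fun i _ => ?_
        rw [abs_mul, abs_of_nonneg (hp i)]
        exact mul_le_mul_of_nonneg_left (hM i) (hp i)
    _ = M := by rw [← Finset.sum_mul, hpsum, one_mul]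
  -- exponent-wise exp bound
  have expb : ∀ i, Real.exp (lam * (a i - (L + ε)))
      ≤ 1 + lam * (a i - (L + ε)) + lam * (ε / 2) := by
    intro i
    set x : ℝ := lam * (a i - (L + ε)) with hx
    have hci : |a i - (L + ε)| ≤ 2 * M + ε := by
      have h1 := abs_le.mp (hM i); have h2 := abs_le.mp hLM
      rw [abs_le]; constructor <;> [linarith; linarith]
    have hxB : |x| ≤ lam * (2 * M + ε) := by
      rw [hx, abs_mul, abs_of_pos hlam]
      exact mul_le_mul_of_nonneg_left hci hlam.le
    have hx1 : |x| ≤ 1 := hxB.trans hB1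
    have hexp := Real.abs_exp_sub_one_sub_id_le hx1
    have hx2 : x ^ 2 ≤ lam * (ε / 2) := by
      calc x ^ 2 = |x| ^ 2 := (sq_abs x).symm
      _ ≤ (lam * (2 * M + ε)) ^ 2 := by
          exact pow_le_pow_left₀ (abs_nonneg x) hxB 2
      _ = lam * (lam * (2 * M + ε) ^ 2) := by ring
      _ ≤ lam * (ε / 2) := mul_le_mul_of_nonneg_left hB2 hlam.le
    have := (le_abs_self _).trans hexp
    linarith
  -- the mgf-type sum bound
  have sumb : ∑ i, p i * Real.exp (lam * (a i - (L + ε))) ≤ 1 - lam * ε / 2 := by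
    calc ∑ i, p i * Real.exp (lam * (a i - (L + ε)))
        ≤ ∑ i, p i * (1 + lam * (a i - (L + ε)) + lam * (ε / 2)) :=
          Finset.sum_le_sum fun i _ => mul_le_mul_of_nonneg_left (expb i) (hp i)
    _ = ∑ i, (p i * (1 + lam * (ε / 2) - lam * (L + ε)) + lam * (p i * a i)) :=
          Finset.sum_congr rfl fun i _ => by ring
    _ = (∑ i, p i) * (1 + lam * (ε / 2) - lam * (L + ε)) + lam * L := by
          rw [Finset.sum_add_distrib, ← Finset.sum_mul, ← Finset.mul_sum, hL]
    _ = 1 - lam * ε / 2 := by rw [hpsum]; ring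
  -- termwise exponential bound
  have step1 : ∀ k ∈ countFinset m n,
      (if (n : ℝ) * (L + ε) ≤ ∑ i, (k i : ℝ) * a i then countProb p k else 0)
        ≤ countProb p k * Real.exp (lam * ((∑ i, (k i : ℝ) * a i) - n * (L + ε))) := by
    intro k _
    split_ifs with h
    · nth_rewrite 1 [← mul_one (countProb p k)]
      refine mul_le_mul_of_nonneg_left (Real.one_le_exp ?_) (countProb_nonneg hp k)
      exact mul_nonneg hlam.le (by linarith)
    · exact mul_nonneg (countProb_nonneg hp k) (Real.exp_pos _).le
  -- rewrite each exponential term in product form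
  have exp_eq : ∀ k : Fin m → ℕ,
      countProb p k * Real.exp (lam * ((∑ i, (k i : ℝ) * a i) - n * (L + ε)))
        = ((Nat.multinomial Finset.univ k : ℝ) *
            ∏ i, (p i * Real.exp (lam * a i)) ^ k i) * Real.exp (-(lam * (L + ε))) ^ n := by
    intro k
    have h1 : Real.exp (lam * ((∑ i, (k i : ℝ) * a i) - n * (L + ε)))
        = (∏ i, Real.exp (lam * a i) ^ k i) * Real.exp (-(lam * (L + ε))) ^ n := by
      rw [← Real.exp_nat_mul]
      have : ∀ i ∈ Finset.univ, Real.exp (lam * a i) ^ k i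
          = Real.exp ((k i : ℝ) * (lam * a i)) := fun i _ => (Real.exp_nat_mul _ _).symm
      rw [Finset.prod_congr rfl this, ← Real.exp_sum, ← Real.exp_add]
      congr 1
      have hs : ∑ x, (k x : ℝ) * (lam * a x) = lam * ∑ x, (k x : ℝ) * a x := by
        rw [Finset.mul_sum]; exact Finset.sum_congr rfl fun i _ => by ring
      rw [hs]; ring
    rw [h1, countProb]
    have hpr : (∏ i, p i ^ k i) * ∏ i, Real.exp (lam * a i) ^ k i
        = ∏ i, (p i * Real.exp (lam * a i)) ^ k i := by
      rw [← Finset.prod_mul_distrib]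
      exact Finset.prod_congr rfl fun i _ => (mul_pow _ _ _).symm
    rw [← hpr]; ring
  -- put it together
  calc ∑ k ∈ countFinset m n,
      (if (n : ℝ) * (L + ε) ≤ ∑ i, (k i : ℝ) * a i then countProb p k else 0)
      ≤ ∑ k ∈ countFinset m n,
          countProb p k * Real.exp (lam * ((∑ i, (k i : ℝ) * a i) - n * (L + ε))) :=
        Finset.sum_le_sum step1
    _ = (∑ i, p i * Real.exp (lam * a i)) ^ n * Real.exp (-(lam * (L + ε))) ^ n := by
        rw [Finset.sum_congr rfl fun k _ => exp_eq k, ← Finset.sum_mul,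
          multinomial_sum_eq n fun i => p i * Real.exp (lam * a i)]
    _ = (∑ i, p i * Real.exp (lam * (a i - (L + ε)))) ^ n := by
        rw [← mul_pow]
        congr 1
        rw [Finset.sum_mul]
        refine Finset.sum_congr rfl fun i _ => ?_
        rw [mul_assoc, ← Real.exp_add]
        congr 2
        ring
    _ ≤ (1 - lam * ε / 2) ^ n := by
        refine pow_le_pow_left₀ (Finset.sum_nonneg fun i _ =>
          mul_nonneg (hp i) (Real.exp_pos _).le) sumb n

lemma chernoff_lower {m : ℕ} (p : Fin m → ℝ) (hp : ∀ i, 0 ≤ p i) (hpsum : ∑ i, p i = 1)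
    (a : Fin m → ℝ) (M ε lam : ℝ) (hM : ∀ i, |a i| ≤ M) (hε : 0 < ε) (hlam : 0 < lam)
    (hB1 : lam * (2 * M + ε) ≤ 1) (hB2 : lam * (2 * M + ε) ^ 2 ≤ ε / 2) (n : ℕ) :
    ∑ k ∈ countFinset m n,
      (if (∑ i, (k i : ℝ) * a i) ≤ (n : ℝ) * ((∑ i, p i * a i) - ε)
        then countProb p k else 0)
      ≤ (1 - lam * ε / 2) ^ n := by
  have h := chernoff p hp hpsum (fun i => -a i) M ε lam
    (fun i => by simpa using hM i) hε hlam hB1 hB2 n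
  refine le_trans (Finset.sum_le_sum fun k _ => ?_) h
  have e1 : (∑ i, p i * -a i) = -∑ i, p i * a i := by
    simp [mul_neg]
  have e2 : (∑ i, (k i : ℝ) * -a i) = -∑ i, (k i : ℝ) * a i := by
    simp [mul_neg]
  split_ifs with h1 h2
  · exact le_refl _
  · exfalso
    apply h2
    rw [e1, e2]
    have he : (n : ℝ) * (-∑ i, p i * a i + ε) = -((n : ℝ) * ((∑ i, p i * a i) - ε)) := by ring
    rw [he]
    exact neg_le_neg h1
  · exact countProb_nonneg hp k
  · exact le_refl 0

/-- **Uniform interior convergence of scaled log-quantiles.** On any compact subset `K`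
of the open simplex, `sup_{W ∈ K} |(1/n) log Q_{n,α}(W) − Σ p_i log W_i| → 0`. -/
theorem uniform_interior_convergence (m : ℕ) (hm : 2 ≤ m)
    (p q : Fin m → ℝ) (hp : ∀ i, 0 < p i ∧ p i < 1) (hpsum : ∑ i, p i = 1)
    (hq : ∀ i, 0 < q i) (α : ℝ) (hα : 0 < α ∧ α < 1)
    (K : Set (Fin m → ℝ)) (hK : K ⊆ openSimplex q) (hKc : IsCompact K) :
    Filter.Tendsto
      (fun n : ℕ => ⨆ W ∈ K,
        |(1 / (n : ℝ)) * Real.log (upperQuantile p n α W) -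
          ∑ i, p i * Real.log (W i)|)
      Filter.atTop (nhds 0) := by
  obtain ⟨hα0, hα1⟩ := hα
  have hp' : ∀ i, 0 ≤ p i := fun i => (hp i).1.le
  rcases K.eq_empty_or_nonempty with hKe | hKne
  · subst hKe
    have hzero : ∀ W : Fin m → ℝ, ∀ n : ℕ,
        (⨆ _ : W ∈ (∅ : Set (Fin m → ℝ)),
          |(1 / (n : ℝ)) * Real.log (upperQuantile p n α W) -
            ∑ i, p i * Real.log (W i)|) = 0 := by
      intro W n
      haveI : IsEmpty (W ∈ (∅ : Set (Fin m → ℝ))) := ⟨fun h => h⟩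
      exact Real.iSup_of_isEmpty _
    simp only [hzero, ciSup_const]
    exact tendsto_const_nhds
  -- uniform bound on |log W i| over K
  have hcont : ContinuousOn (fun W : Fin m → ℝ => ∑ i, |Real.log (W i)|) K := by
    apply continuousOn_finset_sum
    intro i _
    refine ContinuousOn.abs ?_
    refine Real.continuousOn_log.comp (continuous_apply i).continuousOn ?_
    intro W hW
    exact Set.mem_compl_singleton_iff.mpr (ne_of_gt ((hK hW).1 i))
  obtain ⟨W₀, hW₀K, hW₀max⟩ := hKc.exists_isMaxOn hKne hcont
  set M : ℝ := ∑ i, |Real.log (W₀ i)| with hMdef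
  have hMW : ∀ W ∈ K, ∀ i, |Real.log (W i)| ≤ M := by
    intro W hW i
    have h1 : |Real.log (W i)| ≤ ∑ j, |Real.log (W j)| :=
      Finset.single_le_sum (f := fun j => |Real.log (W j)|) (fun j _ => abs_nonneg _)
        (Finset.mem_univ i)
    exact h1.trans (hW₀max hW)
  have hM0 : 0 ≤ M := Finset.sum_nonneg fun i _ => abs_nonneg _
  rw [Metric.tendsto_atTop]
  intro ε hε
  set ε' : ℝ := ε / 2 with hε'def
  have hε'0 : 0 < ε' := by positivity
  have hB0 : 0 < 2 * M + ε' := by linarith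
  set lam : ℝ := min (1 / (2 * M + ε')) (ε' / (2 * (2 * M + ε') ^ 2)) with hlamdef
  have hlam0 : 0 < lam := lt_min (by positivity) (by positivity)
  have hB1 : lam * (2 * M + ε') ≤ 1 := by
    calc lam * (2 * M + ε') ≤ (1 / (2 * M + ε')) * (2 * M + ε') :=
          mul_le_mul_of_nonneg_right (min_le_left _ _) hB0.le
    _ = 1 := by field_simp
  have hB2 : lam * (2 * M + ε') ^ 2 ≤ ε' / 2 := by
    calc lam * (2 * M + ε') ^ 2 ≤ (ε' / (2 * (2 * M + ε') ^ 2)) * (2 * M + ε') ^ 2 :=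
          mul_le_mul_of_nonneg_right (min_le_right _ _) (by positivity)
    _ = ε' / 2 := by field_simp
  set ρ : ℝ := 1 - lam * ε' / 2 with hρdef
  have hρ1 : ρ < 1 := by
    have := mul_pos hlam0 hε'0
    rw [hρdef]; linarith
  have hρ0 : 0 ≤ ρ := by
    have h2 : ε' ≤ 2 * M + ε' := by linarith
    have h3 : lam * ε' ≤ lam * (2 * M + ε') := mul_le_mul_of_nonneg_left h2 hlam0.le
    rw [hρdef]; linarith
  have htend := tendsto_pow_atTop_nhds_zero_of_lt_one hρ0 hρ1
  have hev : ∀ᶠ n : ℕ in atTop, ρ ^ n < min α (1 - α) :=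
    htend.eventually_lt_const (lt_min hα0 (by linarith))
  obtain ⟨N₁, hN₁⟩ := eventually_atTop.mp hev
  refine ⟨max N₁ 1, fun n hn => ?_⟩
  have hn1 : 1 ≤ n := le_trans (le_max_right _ _) hn
  have hρn := hN₁ n (le_trans (le_max_left _ _) hn)
  have hρα : ρ ^ n < α := lt_of_lt_of_le hρn (min_le_left _ _)
  have hρα' : ρ ^ n ≤ 1 - α := (lt_of_lt_of_le hρn (min_le_right _ _)).le
  have hnpos : (0 : ℝ) < n := by exact_mod_cast hn1
  -- the key pointwise bound
  have key : ∀ W ∈ K,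
      |(1 / (n : ℝ)) * Real.log (upperQuantile p n α W) -
        ∑ i, p i * Real.log (W i)| ≤ ε' := by
    intro W hW
    have hWpos : ∀ i, 0 < W i := (hK hW).1
    have hMa : ∀ i, |Real.log (W i)| ≤ M := hMW W hW
    set L : ℝ := ∑ i, p i * Real.log (W i) with hLdef
    have hup := chernoff p hp' hpsum (fun i => Real.log (W i)) M ε' lam hMa hε'0 hlam0 hB1 hB2 n
    have hlow := chernoff_lower p hp' hpsum (fun i => Real.log (W i)) M ε' lam hMa hε'0 hlam0 hB1 hB2 n
    -- every element of the quantile set is at most T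
    have hT : ∀ t ∈ {t : ℝ | 0 ≤ t ∧
        α ≤ ∑ k ∈ countFinset m n, if t ≤ mono W k then countProb p k else 0},
        t ≤ Real.exp ((n : ℝ) * (L + ε')) := by
      intro t ht
      by_contra hc
      push_neg at hc
      have hle : (∑ k ∈ countFinset m n, if t ≤ mono W k then countProb p k else 0)
          ≤ ∑ k ∈ countFinset m n,
              (if (n : ℝ) * (L + ε') ≤ ∑ i, (k i : ℝ) * Real.log (W i)
                then countProb p k else 0) := by
        refine Finset.sum_le_sum fun k _ => ?_
        by_cases h1 : t ≤ mono W k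
        · rw [if_pos h1]
          have hlt : Real.exp ((n : ℝ) * (L + ε'))
              < Real.exp (∑ i, (k i : ℝ) * Real.log (W i)) := by
            rw [← mono_eq_exp hWpos k]
            exact lt_of_lt_of_le hc h1
          rw [if_pos (Real.exp_lt_exp.mp hlt).le]
        · rw [if_neg h1]
          by_cases h2 : (n : ℝ) * (L + ε') ≤ ∑ i, (k i : ℝ) * Real.log (W i)
          · rw [if_pos h2]; exact countProb_nonneg hp' k
          · rw [if_neg h2]
      have : α ≤ ρ ^ n := le_trans ht.2 (hle.trans hup)
      exact absurd this (not_le.mpr hρα)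
    -- the lower point belongs to the quantile set
    have hti : Real.exp ((n : ℝ) * (L - ε')) ∈ {t : ℝ | 0 ≤ t ∧
        α ≤ ∑ k ∈ countFinset m n, if t ≤ mono W k then countProb p k else 0} := by
      refine ⟨(Real.exp_pos _).le, ?_⟩
      have hsplit : ∀ k : Fin m → ℕ,
          (if Real.exp ((n : ℝ) * (L - ε')) ≤ mono W k then countProb p k else 0)
            = countProb p k -
              (if ¬ (Real.exp ((n : ℝ) * (L - ε')) ≤ mono W k) then countProb p k else 0) := by
        intro k; split_ifs <;> simp
      have hcompl : (∑ k ∈ countFinset m n,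
            if ¬ (Real.exp ((n : ℝ) * (L - ε')) ≤ mono W k) then countProb p k else 0)
          ≤ ∑ k ∈ countFinset m n,
              (if (∑ i, (k i : ℝ) * Real.log (W i)) ≤ (n : ℝ) * (L - ε')
                then countProb p k else 0) := by
        refine Finset.sum_le_sum fun k _ => ?_
        by_cases h1 : Real.exp ((n : ℝ) * (L - ε')) ≤ mono W k
        · rw [if_neg (not_not_intro h1)]
          by_cases h2 : (∑ i, (k i : ℝ) * Real.log (W i)) ≤ (n : ℝ) * (L - ε')
          · rw [if_pos h2]; exact countProb_nonneg hp' k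
          · rw [if_neg h2]
        · rw [if_pos h1]
          have hlt : mono W k < Real.exp ((n : ℝ) * (L - ε')) := not_le.mp h1
          rw [mono_eq_exp hWpos k] at hlt
          rw [if_pos (Real.exp_lt_exp.mp hlt).le]
      have hbound : (∑ k ∈ countFinset m n,
            if ¬ (Real.exp ((n : ℝ) * (L - ε')) ≤ mono W k) then countProb p k else 0)
          ≤ ρ ^ n := hcompl.trans hlow
      have htotal : (∑ k ∈ countFinset m n,
            if Real.exp ((n : ℝ) * (L - ε')) ≤ mono W k then countProb p k else 0)
          = 1 - ∑ k ∈ countFinset m n,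
              (if ¬ (Real.exp ((n : ℝ) * (L - ε')) ≤ mono W k) then countProb p k else 0) := by
        rw [Finset.sum_congr rfl fun k _ => hsplit k, Finset.sum_sub_distrib,
          countProb_sum hpsum n]
      rw [htotal]
      linarith
    have hne : {t : ℝ | 0 ≤ t ∧
        α ≤ ∑ k ∈ countFinset m n, if t ≤ mono W k then countProb p k else 0}.Nonempty :=
      ⟨_, hti⟩
    have hbdd : BddAbove {t : ℝ | 0 ≤ t ∧
        α ≤ ∑ k ∈ countFinset m n, if t ≤ mono W k then countProb p k else 0} :=
      ⟨Real.exp ((n : ℝ) * (L + ε')), hT⟩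
    have hQub : upperQuantile p n α W ≤ Real.exp ((n : ℝ) * (L + ε')) := csSup_le hne hT
    have hQlb : Real.exp ((n : ℝ) * (L - ε')) ≤ upperQuantile p n α W := le_csSup hbdd hti
    have hQpos : 0 < upperQuantile p n α W := lt_of_lt_of_le (Real.exp_pos _) hQlb
    have hlog1 : (n : ℝ) * (L - ε') ≤ Real.log (upperQuantile p n α W) := by
      rw [← Real.log_exp ((n : ℝ) * (L - ε'))]
      exact Real.log_le_log (Real.exp_pos _) hQlb
    have hlog2 : Real.log (upperQuantile p n α W) ≤ (n : ℝ) * (L + ε') := by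
      rw [← Real.log_exp ((n : ℝ) * (L + ε'))]
      exact Real.log_le_log hQpos hQub
    have e1 : (1 / (n : ℝ)) * ((n : ℝ) * (L - ε')) = L - ε' := by field_simp
    have e2 : (1 / (n : ℝ)) * ((n : ℝ) * (L + ε')) = L + ε' := by field_simp
    have hmul1 : L - ε' ≤ (1 / (n : ℝ)) * Real.log (upperQuantile p n α W) := by
      rw [← e1]; exact mul_le_mul_of_nonneg_left hlog1 (by positivity)
    have hmul2 : (1 / (n : ℝ)) * Real.log (upperQuantile p n α W) ≤ L + ε' := by
      rw [← e2]; exact mul_le_mul_of_nonneg_left hlog2 (by positivity)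
    rw [abs_le]
    constructor <;> linarith
  -- put the supremum bound together
  have hsup_le : (⨆ W ∈ K,
      |(1 / (n : ℝ)) * Real.log (upperQuantile p n α W) -
        ∑ i, p i * Real.log (W i)|) ≤ ε' := by
    refine Real.iSup_le (fun W => Real.iSup_le (fun hW => key W hW) hε'0.le) hε'0.le
  have hsup_nonneg : 0 ≤ ⨆ W ∈ K,
      |(1 / (n : ℝ)) * Real.log (upperQuantile p n α W) -
        ∑ i, p i * Real.log (W i)| :=
    Real.iSup_nonneg fun W => Real.iSup_nonneg fun _ => abs_nonneg _
  rw [Real.dist_eq, sub_zero, abs_of_nonneg hsup_nonneg]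
  calc (⨆ W ∈ K, |(1 / (n : ℝ)) * Real.log (upperQuantile p n α W) -
        ∑ i, p i * Real.log (W i)|) ≤ ε' := hsup_le
  _ < ε := by rw [hε'def]; linarith
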